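/- Let v(P) = inf_{x ∈ H} { f(x) + g(Ax) } and assume v(P) ∈ ℝ. Suppose there are sequences (x_n)_{n ≥ 0} ⊆ dom f, (y_n)_{n ≥ 0} ⊆ dom g and a sequence (ε_n)_{n ≥ 0} of positive reals with ε_n → 0 such that ‖A x_n − y_n‖ ≤ ε_n and f(x_n) + g(y_n) ≤ v(P) + ε_n for all n. Then there exists x̄ ∈ H with A x̄ ∈ dom g and f(x̄) + g(A x̄) = v(P), i.e., the problem (P) has an optimal solution. -/

import Mathlib

/-! The objective `f + g ∘ A` is convex and lower semicontinuous, and it is finite only where `f`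
is, hence on a bounded set. Closed convex sets are weakly closed, so the objective is weakly lower
semicontinuous, and a closed ball containing its domain is weakly compact (Banach–Alaoglu, through
the Riesz isomorphism). Hence the infimum `v(P)` is attained. -/

open Set InnerProductSpace

noncomputable def InnerProductSpace.weakSpaceHomeomorphWeakDual (H : Type*)
    [NormedAddCommGroup H] [InnerProductSpace ℝ H] [CompleteSpace H] :
    WeakSpace ℝ H ≃ₜ WeakDual ℝ H where
  toFun z := toDual ℝ H ((toWeakSpace ℝ H).symm z)
  invFun φ := toWeakSpace ℝ H ((toDual ℝ H).symm φ)
  left_inv z := by simp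
  right_inv φ := (toDual ℝ H).apply_symm_apply φ
  continuous_toFun := WeakDual.continuous_of_continuous_eval fun y =>
    (WeakBilin.eval_continuous _ (toDual ℝ H y)).congr fun z => real_inner_comm _ _
  continuous_invFun := WeakBilin.continuous_of_continuous_eval _ fun ℓ =>
    (WeakDual.eval_continuous ((toDual ℝ H).symm ℓ)).congr fun φ => by
      change φ ((toDual ℝ H).symm ℓ) = ℓ ((toDual ℝ H).symm φ)
      rw [← toDual_symm_apply (y := ℓ), real_inner_comm]
      exact toDual_symm_apply.symm

theorem InnerProductSpace.isCompact_toWeakSpace_closedBall {H : Type*}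
    [NormedAddCommGroup H] [InnerProductSpace ℝ H] [CompleteSpace H] (r : ℝ) :
    IsCompact (toWeakSpace ℝ H '' Metric.closedBall 0 r) := by
  convert (WeakDual.isCompact_closedBall (𝕜 := ℝ) (E := H) 0 r).image
    (weakSpaceHomeomorphWeakDual H).symm.continuous using 1
  ext z
  rw [Homeomorph.image_symm, (toWeakSpace ℝ H).image_eq_preimage_symm]
  simp only [mem_preimage, Metric.mem_closedBall, dist_zero_right]
  exact (iff_of_eq (congrArg (· ≤ r) ((toDual ℝ H).norm_map _))).symm

theorem LowerSemicontinuous.comp_toWeakSpace_symm {E β : Type*} [AddCommGroup E] [Module ℝ E]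
    [TopologicalSpace E] [IsTopologicalAddGroup E] [ContinuousSMul ℝ E] [LocallyConvexSpace ℝ E]
    [LinearOrder β] [TopologicalSpace β] {f : E → β} (hf : LowerSemicontinuous f)
    (hq : QuasiconvexOn ℝ univ f) :
    LowerSemicontinuous (f ∘ (toWeakSpace ℝ E).symm) := by
  refine lowerSemicontinuous_iff_isClosed_preimage.2 fun r => ?_
  have hconv : Convex ℝ (f ⁻¹' Iic r) := by
    simpa only [preimage, mem_Iic, mem_univ, true_and] using hq r
  rw [preimage_comp, ← LinearEquiv.image_eq_preimage_symm, ← closure_eq_iff_isClosed,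
    ← hconv.toWeakSpace_closure ℝ, (hf.isClosed_preimage r).closure_eq]

theorem LowerSemicontinuous.exists_forall_le_of_quasiconvexOn {H β : Type*}
    [NormedAddCommGroup H] [InnerProductSpace ℝ H] [CompleteSpace H]
    [LinearOrder β] [OrderTop β] [TopologicalSpace β] {Φ : H → β} (hlsc : LowerSemicontinuous Φ)
    (hq : QuasiconvexOn ℝ univ Φ) (hdom : Bornology.IsBounded {x | Φ x < ⊤}) :
    ∃ x, ∀ z, Φ x ≤ Φ z := by
  obtain ⟨R, hR, hdomR⟩ := hdom.subset_closedBall_lt 0 0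
  obtain ⟨w, -, hw⟩ :=
    LowerSemicontinuousOn.exists_isMinOn (s := toWeakSpace ℝ H '' Metric.closedBall 0 R)
    ⟨0, 0, Metric.mem_closedBall_self hR.le, map_zero _⟩ (isCompact_toWeakSpace_closedBall R)
    ((hlsc.comp_toWeakSpace_symm hq).lowerSemicontinuousOn _)
  refine ⟨(toWeakSpace ℝ H).symm w, fun z => ?_⟩
  by_cases hz : Φ z < ⊤
  · simpa using hw ⟨z, hdomR hz, rfl⟩
  · exact (not_lt_top_iff.1 hz).symm ▸ le_top

/-- `ConvexOn` does not apply here since `EReal` is not an `ℝ`-module. -/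
def ERealConvex {E : Type*} [AddCommGroup E] [Module ℝ E] (f : E → EReal) : Prop :=
  ∀ x y : E, ∀ a b : ℝ, 0 ≤ a → 0 ≤ b → a + b = 1 →
    f (a • x + b • y) ≤ (a : EReal) * f x + (b : EReal) * f y

namespace ERealConvex

variable {E F : Type*} [AddCommGroup E] [Module ℝ E] [AddCommGroup F] [Module ℝ F]

theorem add {f g : E → EReal} (hf : ERealConvex f) (hg : ERealConvex g) :
    ERealConvex fun x => f x + g x := by
  intro x y a b ha hb hab
  rw [EReal.left_distrib_of_nonneg_of_ne_top (EReal.coe_nonneg.2 ha) (EReal.coe_ne_top a),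
    EReal.left_distrib_of_nonneg_of_ne_top (EReal.coe_nonneg.2 hb) (EReal.coe_ne_top b),
    add_add_add_comm]
  exact add_le_add (hf x y a b ha hb hab) (hg x y a b ha hb hab)

theorem comp_linearMap {g : F → EReal} (hg : ERealConvex g) (A : E →ₗ[ℝ] F) :
    ERealConvex (g ∘ A) := by
  intro x y a b ha hb hab
  simpa only [Function.comp_apply, map_add, map_smul] using hg (A x) (A y) a b ha hb hab

theorem quasiconvexOn {f : E → EReal} (hf : ERealConvex f) : QuasiconvexOn ℝ univ f := by
  rintro r x ⟨-, hx⟩ y ⟨-, hy⟩ a b ha hb hab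
  refine ⟨mem_univ _, (hf x y a b ha hb hab).trans ?_⟩
  calc (a : EReal) * f x + (b : EReal) * f y ≤ (a : EReal) * r + (b : EReal) * r := by
        gcongr
    _ = r := by
        rw [← EReal.right_distrib_of_nonneg (EReal.coe_nonneg.2 ha) (EReal.coe_nonneg.2 hb),
          ← EReal.coe_add, hab, EReal.coe_one, one_mul]

end ERealConvex

theorem primal_problem_has_optimal_solution_general
    {H : Type*} [NormedAddCommGroup H] [InnerProductSpace ℝ H] [CompleteSpace H]
    {m : ℕ}
    (f : H → EReal) (g : EuclideanSpace ℝ (Fin m) → EReal)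
    (hf_proper_bot : ∀ x, f x ≠ ⊥)
    (hf_convex : ∀ x y : H, ∀ a b : ℝ, 0 ≤ a → 0 ≤ b → a + b = 1 →
      f (a • x + b • y) ≤ (a : EReal) * f x + (b : EReal) * f y)
    (hf_lsc : LowerSemicontinuous f)
    (hf_bdd : Bornology.IsBounded {x : H | f x < ⊤})
    (hg_proper_bot : ∀ x, g x ≠ ⊥)
    (hg_convex : ∀ x y : EuclideanSpace ℝ (Fin m), ∀ a b : ℝ, 0 ≤ a → 0 ≤ b → a + b = 1 →
      g (a • x + b • y) ≤ (a : EReal) * g x + (b : EReal) * g y)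
    (hg_lsc : LowerSemicontinuous g)
    (A : H →L[ℝ] EuclideanSpace ℝ (Fin m))
    (vP : ℝ) (hvP : (⨅ x : H, f x + g (A x)) = (vP : EReal))
    (x : ℕ → H) (y : ℕ → EuclideanSpace ℝ (Fin m)) :
    ∃ xbar : H, g (A xbar) ≠ ⊤ ∧ f xbar + g (A xbar) = (vP : EReal) := by
  set Φ : H → EReal := fun z => f z + g (A z)
  have hΦ_lsc : LowerSemicontinuous Φ :=
    hf_lsc.add' (hg_lsc.comp A.continuous) fun z =>
      EReal.continuousAt_add (.inr (hg_proper_bot _)) (.inl (hf_proper_bot _))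
  have hΦ_convex : ERealConvex Φ :=
    ERealConvex.add hf_convex (ERealConvex.comp_linearMap hg_convex A.toLinearMap)
  have hΦ_dom : Bornology.IsBounded {z | Φ z < ⊤} := by
    refine hf_bdd.subset fun z (hz : Φ z < ⊤) => ?_
    refine show f z < ⊤ from lt_top_iff_ne_top.2 fun hfz => hz.ne ?_
    simp [Φ, hfz, EReal.top_add_of_ne_bot (hg_proper_bot _)]
  obtain ⟨xbar, hmin⟩ := hΦ_lsc.exists_forall_le_of_quasiconvexOn hΦ_convex.quasiconvexOn hΦ_dom
  have hopt : Φ xbar = vP := hvP ▸ le_antisymm (le_iInf hmin) (iInf_le Φ xbar)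
  refine ⟨xbar, fun hg_top => EReal.coe_ne_top vP ?_, hopt⟩
  rw [← hopt]
  simp [Φ, hg_top, EReal.add_top_of_ne_bot (hf_proper_bot _)]

/-- Let `v(P) = inf_{x ∈ H} { f(x) + g(Ax) }` and assume `v(P) ∈ ℝ`. Suppose
there are sequences `(x_n) ⊆ dom f`, `(y_n) ⊆ dom g` and positive reals `ε_n → 0` such that
`‖A x_n − y_n‖ ≤ ε_n` and `f(x_n) + g(y_n) ≤ v(P) + ε_n` for all `n`. Then there exists
`x̄ ∈ H` with `A x̄ ∈ dom g` and `f(x̄) + g(A x̄) = v(P)`, i.e., (P) has an optimal solution. -/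
theorem primal_problem_has_optimal_solution
    {H : Type*} [NormedAddCommGroup H] [InnerProductSpace ℝ H] [CompleteSpace H]
    {m : ℕ}
    (f : H → EReal) (g : EuclideanSpace ℝ (Fin m) → EReal)
    (hf_proper_top : ∃ x, f x ≠ ⊤) (hf_proper_bot : ∀ x, f x ≠ ⊥)
    (hf_convex : ∀ x y : H, ∀ a b : ℝ, 0 ≤ a → 0 ≤ b → a + b = 1 →
      f (a • x + b • y) ≤ (a : EReal) * f x + (b : EReal) * f y)
    (hf_lsc : LowerSemicontinuous f)
    (hf_bdd : Bornology.IsBounded {x : H | f x < ⊤})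
    (hg_proper_top : ∃ x, g x ≠ ⊤) (hg_proper_bot : ∀ x, g x ≠ ⊥)
    (hg_convex : ∀ x y : EuclideanSpace ℝ (Fin m), ∀ a b : ℝ, 0 ≤ a → 0 ≤ b → a + b = 1 →
      g (a • x + b • y) ≤ (a : EReal) * g x + (b : EReal) * g y)
    (hg_lsc : LowerSemicontinuous g)
    (A : H →L[ℝ] EuclideanSpace ℝ (Fin m))
    (vP : ℝ) (hvP : (⨅ x : H, f x + g (A x)) = (vP : EReal))
    (x : ℕ → H) (y : ℕ → EuclideanSpace ℝ (Fin m)) (ε : ℕ → ℝ)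
    (hx : ∀ n, f (x n) ≠ ⊤) (hy : ∀ n, g (y n) ≠ ⊤)
    (hε : ∀ n, 0 < ε n)
    (hεlim : Filter.Tendsto ε Filter.atTop (nhds 0))
    (hfeas : ∀ n, ‖A (x n) - y n‖ ≤ ε n)
    (hval : ∀ n, f (x n) + g (y n) ≤ (vP : EReal) + ((ε n : ℝ) : EReal)) :
    ∃ xbar : H, g (A xbar) ≠ ⊤ ∧ f xbar + g (A xbar) = (vP : EReal) :=
  primal_problem_has_optimal_solution_general f g hf_proper_bot hf_convex hf_lsc hf_bdd
    hg_proper_bot hg_convex hg_lsc A vP hvP x y
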